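/- arXiv:2108.00642 — 6 statements merged into one kernel-verified Lean document; each statement's English description precedes it below -/
import Mathlib

section
/- Let (X, d) be a metric space, let K ⊆ X be compact, and let C, D be closed subsets of X with C ∪ D = K. Then for every ε > 0 there exists δ > 0 such that the intersection of the closed δ-neighbourhoods of C and of D (within X) is contained in the closed ε-neighbourhood of C ∩ D. -/
open Metric

/-!
Points of `C` that stay `ε/2` away from `C ∩ D` form a compact set disjoint from the closed
set `D`, hence at positive distance `δ` from it. A point `x` that is `δ'`-close to both `C`
and `D` has a nearest point `c ∈ C` that is `2δ'`-close to `D`, so for small `δ'` the point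
`c` lies within `ε/2` of `C ∩ D`, and `x` within `ε`.
-/

theorem IsCompact.exists_pos_forall_infDist_inter_le {X : Type*} [MetricSpace X] {C D : Set X}
    (hC : IsCompact C) (hD : IsClosed D) {ε : ℝ} (hε : 0 < ε) :
    ∃ δ > 0, ∀ x, infDist x C ≤ δ → infDist x D ≤ δ → infDist x (C ∩ D) ≤ ε := by
  rcases (C ∩ D).eq_empty_or_nonempty with hempty | hne
  · exact ⟨1, one_pos, fun x _ _ => by simp [hempty, hε.le]⟩
  set S := C \ thickening (ε / 2) (C ∩ D)
  have hSD : Disjoint S D := Set.disjoint_left.2 fun c hcS hcD =>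
    hcS.2 (self_subset_thickening (half_pos hε) _ ⟨hcS.1, hcD⟩)
  obtain ⟨δ, hδ, hsep⟩ := hSD.exists_thickenings (hC.diff isOpen_thickening) hD
  refine ⟨min (δ / 3) (ε / 2), by positivity, fun x hxC hxD => ?_⟩
  obtain ⟨c, hcC, hxc⟩ := hC.exists_infDist_eq_dist (hne.mono Set.inter_subset_left) x
  have hcD : c ∈ thickening δ D := by
    rw [mem_thickening_iff_infDist_lt (hne.mono Set.inter_subset_right)]
    calc infDist c D ≤ infDist x D + dist c x := infDist_le_infDist_add_dist
      _ ≤ 2 * min (δ / 3) (ε / 2) := by rw [dist_comm, ← hxc]; linarith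
      _ < δ := by linarith [min_le_left (δ / 3) (ε / 2)]
  have hcS : c ∉ S := fun hcS =>
    hsep.ne_of_mem (self_subset_thickening hδ _ hcS) hcD rfl
  have hc : infDist c (C ∩ D) < ε / 2 := by
    rw [← mem_thickening_iff_infDist_lt hne]
    by_contra h
    exact hcS ⟨hcC, h⟩
  calc infDist x (C ∩ D) ≤ infDist c (C ∩ D) + dist x c := infDist_le_infDist_add_dist
    _ ≤ ε := by linarith [min_le_right (δ / 3) (ε / 2)]

/-- For a compact set `K` covered by two closed sets `C, D`, the intersection of the closed
`δ`-neighbourhoods of `C` and `D` is eventually contained in the closed `ε`-neighbourhood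
of `C ∩ D`. -/
theorem stmt0 {X : Type*} [MetricSpace X] (K C D : Set X)
    (hK : IsCompact K) (hC : IsClosed C) (hD : IsClosed D) (hCD : C ∪ D = K) :
    ∀ ε > 0, ∃ δ > 0,
      {x : X | infDist x C ≤ δ} ∩ {x : X | infDist x D ≤ δ}
        ⊆ {x : X | infDist x (C ∩ D) ≤ ε} := by
  intro ε hε
  have hCcompact : IsCompact C := hK.of_isClosed_subset hC (hCD ▸ Set.subset_union_left)
  obtain ⟨δ, hδ, h⟩ := hCcompact.exists_pos_forall_infDist_inter_le hD hε
  exact ⟨δ, hδ, fun x hx => h x hx.1 hx.2⟩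
end

section
/- Let X be the disjoint union of a sequence of finite metric spaces (X_n, d_n), and let d and d' be two metrics on X such that each of d, d' restricts to d_n on each X_n, and such that d(X_n, X \ X_n) → ∞ and d'(X_n, X \ X_n) → ∞ as n → ∞. Then the identity map (X, d) → (X, d') is a coarse equivalence. -/
open Filter

section CoarseGeometry

variable {X Y : Type*}

/-- `f` is uniformly expansive with respect to the distance functions `dX`, `dY`. -/
def UnifExpansiveW (dX : X → X → ℝ) (dY : Y → Y → ℝ) (f : X → Y) : Prop :=
  ∃ ρ : ℝ → ℝ, Monotone ρ ∧ ∀ x y, dY (f x) (f y) ≤ ρ (dX x y)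

/-- A set is bounded with respect to a distance function. -/
def BoundedW (d : X → X → ℝ) (S : Set X) : Prop :=
  ∃ R : ℝ, ∀ x ∈ S, ∀ y ∈ S, d x y ≤ R

/-- `f` is (metrically) proper: preimages of bounded sets are bounded. -/
def ProperMapW (dX : X → X → ℝ) (dY : Y → Y → ℝ) (f : X → Y) : Prop :=
  ∀ B : Set Y, BoundedW dY B → BoundedW dX (f ⁻¹' B)

/-- A coarse map: uniformly expansive and proper. -/
def CoarseMapW (dX : X → X → ℝ) (dY : Y → Y → ℝ) (f : X → Y) : Prop :=
  UnifExpansiveW dX dY f ∧ ProperMapW dX dY f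

/-- Two maps are close (at uniformly bounded distance). -/
def CloseW {Z W : Type*} (d : W → W → ℝ) (f g : Z → W) : Prop :=
  ∃ R : ℝ, ∀ z, d (f z) (g z) ≤ R

/-- A coarse equivalence: a coarse map with a coarse inverse up to closeness. -/
def CoarseEquivalenceW (dX : X → X → ℝ) (dY : Y → Y → ℝ) (f : X → Y) : Prop :=
  CoarseMapW dX dY f ∧ ∃ g : Y → X, CoarseMapW dY dX g ∧
    CloseW dY (f ∘ g) id ∧ CloseW dX (g ∘ f) id

end CoarseGeometry

/-- The distance function of an explicitly given metric space structure. -/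
def mdist {α : Type*} (m : MetricSpace α) : α → α → ℝ :=
  @dist α m.toPseudoMetricSpace.toDist

lemma mdist_comm {α : Type*} (m : MetricSpace α) (x y : α) : mdist m x y = mdist m y x :=
  @dist_comm α m.toPseudoMetricSpace x y

lemma bound_aux (X : ℕ → Type*) [∀ n, MetricSpace (X n)] [∀ n, Finite (X n)]
    (m₁ m₂ : MetricSpace (Σ n, X n))
    (h₁ : ∀ (n : ℕ) (x y : X n), mdist m₁ ⟨n, x⟩ ⟨n, y⟩ = dist x y)
    (h₂ : ∀ (n : ℕ) (x y : X n), mdist m₂ ⟨n, x⟩ ⟨n, y⟩ = dist x y)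
    (hsep₁ : ∀ R : ℝ, ∃ N : ℕ, ∀ p q : Σ n, X n,
      N ≤ p.1 → p.1 ≠ q.1 → R ≤ mdist m₁ p q) :
    ∀ R : ℝ, ∃ M : ℝ, ∀ x y : Σ n, X n, mdist m₁ x y ≤ R → mdist m₂ x y ≤ M := by
  intro R
  obtain ⟨N, hN⟩ := hsep₁ (R + 1)
  set S : Set (Σ n, X n) := {x | x.1 < N} with hSdef
  have hS : S.Finite := by
    have he : S = ⋃ n ∈ {n : ℕ | n < N}, Sigma.mk n '' Set.univ := by
      ext ⟨n, x⟩; simp [hSdef]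
    rw [he]
    exact (Set.finite_lt_nat N).biUnion fun n _ => Set.finite_univ.image _
  have hT : ((fun p : (Σ n, X n) × (Σ n, X n) => mdist m₂ p.1 p.2) '' (S ×ˢ S)).Finite :=
    (hS.prod hS).image _
  obtain ⟨M, hM⟩ := hT.bddAbove
  refine ⟨max M R, fun x y hxy => ?_⟩
  by_cases hxyi : x.1 = y.1
  · obtain ⟨n, a⟩ := x
    obtain ⟨n', b⟩ := y
    obtain rfl : n = n' := hxyi
    rw [h₂ n a b]
    rw [h₁ n a b] at hxy
    exact le_max_of_le_right hxy
  · have hx : x.1 < N := by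
      by_contra h
      push_neg at h
      have := hN x y h hxyi
      linarith
    have hy : y.1 < N := by
      by_contra h
      push_neg at h
      have h' := hN y x h (Ne.symm hxyi)
      rw [mdist_comm] at h'
      linarith
    exact le_max_of_le_left (hM ⟨⟨x, y⟩, ⟨hx, hy⟩, rfl⟩)

lemma exp_aux (X : ℕ → Type*) [∀ n, MetricSpace (X n)] [∀ n, Finite (X n)]
    (m₁ m₂ : MetricSpace (Σ n, X n))
    (h₁ : ∀ (n : ℕ) (x y : X n), mdist m₁ ⟨n, x⟩ ⟨n, y⟩ = dist x y)
    (h₂ : ∀ (n : ℕ) (x y : X n), mdist m₂ ⟨n, x⟩ ⟨n, y⟩ = dist x y)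
    (hsep₁ : ∀ R : ℝ, ∃ N : ℕ, ∀ p q : Σ n, X n,
      N ≤ p.1 → p.1 ≠ q.1 → R ≤ mdist m₁ p q) :
    ∃ ρ : ℝ → ℝ, Monotone ρ ∧ ∀ x y : Σ n, X n, mdist m₂ x y ≤ ρ (mdist m₁ x y) := by
  choose M hM using bound_aux X m₁ m₂ h₁ h₂ hsep₁
  set A : ℝ → Set ℝ := fun t =>
    insert 0 {r | ∃ x y : Σ n, X n, mdist m₁ x y ≤ t ∧ mdist m₂ x y = r} with hAdef
  have hbdd : ∀ t, BddAbove (A t) := by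
    intro t
    refine ⟨max (M t) 0, ?_⟩
    rintro r (rfl | ⟨x, y, h1, rfl⟩)
    · exact le_max_right _ _
    · exact le_max_of_le_left (hM t x y h1)
  refine ⟨fun t => sSup (A t), ?_, ?_⟩
  · intro s t hst
    refine csSup_le_csSup (hbdd t) ⟨0, Set.mem_insert _ _⟩ ?_
    rintro r (rfl | ⟨x, y, h1, rfl⟩)
    · exact Set.mem_insert _ _
    · exact Set.mem_insert_of_mem _ ⟨x, y, h1.trans hst, rfl⟩
  · intro x y
    exact le_csSup (hbdd _) (Set.mem_insert_of_mem _ ⟨x, y, le_refl _, rfl⟩)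

/-- Any two coarse-disjoint-union metrics on a disjoint union of a sequence of finite
metric spaces are coarsely equivalent via the identity map. -/
theorem stmt2 (X : ℕ → Type*) [∀ n, MetricSpace (X n)] [∀ n, Finite (X n)]
    (m₁ m₂ : MetricSpace (Σ n, X n))
    (h₁ : ∀ (n : ℕ) (x y : X n), mdist m₁ ⟨n, x⟩ ⟨n, y⟩ = dist x y)
    (h₂ : ∀ (n : ℕ) (x y : X n), mdist m₂ ⟨n, x⟩ ⟨n, y⟩ = dist x y)
    (hsep₁ : ∀ R : ℝ, ∃ N : ℕ, ∀ p q : Σ n, X n,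
      N ≤ p.1 → p.1 ≠ q.1 → R ≤ mdist m₁ p q)
    (hsep₂ : ∀ R : ℝ, ∃ N : ℕ, ∀ p q : Σ n, X n,
      N ≤ p.1 → p.1 ≠ q.1 → R ≤ mdist m₂ p q) :
    CoarseEquivalenceW (mdist m₁) (mdist m₂) (id : (Σ n, X n) → Σ n, X n) := by
  obtain ⟨ρ₁, hρ₁m, hρ₁⟩ := exp_aux X m₁ m₂ h₁ h₂ hsep₁
  obtain ⟨ρ₂, hρ₂m, hρ₂⟩ := exp_aux X m₂ m₁ h₂ h₁ hsep₂
  have hself₁ : ∀ x, mdist m₁ x x = 0 := fun x => @dist_self _ m₁.toPseudoMetricSpace x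
  have hself₂ : ∀ x, mdist m₂ x x = 0 := fun x => @dist_self _ m₂.toPseudoMetricSpace x
  have prop₁ : ProperMapW (mdist m₁) (mdist m₂) id := by
    rintro B ⟨R, hR⟩
    exact ⟨ρ₂ R, fun x hx y hy =>
      (hρ₂ x y).trans (hρ₂m (hR x hx y hy))⟩
  have prop₂ : ProperMapW (mdist m₂) (mdist m₁) id := by
    rintro B ⟨R, hR⟩
    exact ⟨ρ₁ R, fun x hx y hy =>
      (hρ₁ x y).trans (hρ₁m (hR x hx y hy))⟩
  exact ⟨⟨⟨ρ₁, hρ₁m, hρ₁⟩, prop₁⟩, id, ⟨⟨ρ₂, hρ₂m, hρ₂⟩, prop₂⟩,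
    ⟨0, fun z => le_of_eq (hself₂ z)⟩, ⟨0, fun z => le_of_eq (hself₁ z)⟩⟩
end

section
/- Let f(x) = x/√(1+x²) and let K ⊆ ℝ be compact. Then the function (x, t) ↦ (f(x − t) − 1)(1 + x²) is uniformly bounded for x ∈ [0, ∞) and t ∈ K, and the function (x, t) ↦ (f(x − t) + 1)(1 + x²) is uniformly bounded for x ∈ (−∞, 0] and t ∈ K. -/
/-!
Write `u = x - t` and `s = √(1 + u²)`. Since `|u| < s`, the factor `1 - u / s` lies in `[0, 2]`,
and for `u ≥ 0` it is at most `s⁻² = (1 + u²)⁻¹`, because `s² - u s ≤ s² - u² = 1`.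
Peetre's inequality `1 + x² ≤ 2 (1 + t²)(1 + (x - t)²)` converts the decay in `x - t` into decay
in `x`, and for `0 ≤ x < t` the weight `1 + x²` is at most `1 + t²`. This bounds the first product
by `2 (1 + t²)`, which is bounded on the compact `K`; the second product is the first one under
`(x, t) ↦ (-x, -t)`.
-/

open Real

lemma abs_lt_sqrt_one_add_sq (u : ℝ) : |u| < √(1 + u ^ 2) := by
  rw [← sqrt_sq_eq_abs]
  exact sqrt_lt_sqrt (sq_nonneg u) (by linarith)

lemma abs_div_sqrt_one_add_sq_lt_one (u : ℝ) : |u / √(1 + u ^ 2)| < 1 := by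
  have hs : 0 < √(1 + u ^ 2) := sqrt_pos.2 (by positivity)
  rw [abs_div, abs_of_pos hs, div_lt_one hs]
  exact abs_lt_sqrt_one_add_sq u

lemma one_sub_div_sqrt_one_add_sq_le_inv {u : ℝ} (hu : 0 ≤ u) :
    1 - u / √(1 + u ^ 2) ≤ (1 + u ^ 2)⁻¹ := by
  set s := √(1 + u ^ 2)
  have hs : 0 < s := sqrt_pos.2 (by positivity)
  have hs2 : s ^ 2 = 1 + u ^ 2 := sq_sqrt (by positivity)
  have hus : u ≤ s := (le_abs_self u).trans (abs_lt_sqrt_one_add_sq u).le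
  rw [← hs2, show 1 - u / s = (s ^ 2 - u * s) / s ^ 2 by field_simp, inv_eq_one_div]
  exact div_le_div_of_nonneg_right (by nlinarith [mul_le_mul_of_nonneg_left hus hu])
    (by positivity)

lemma one_add_sq_le_two_mul_one_add_sq_mul (x t : ℝ) :
    1 + x ^ 2 ≤ 2 * (1 + t ^ 2) * (1 + (x - t) ^ 2) := by
  nlinarith [sq_nonneg (x - 2 * t), mul_nonneg (sq_nonneg t) (sq_nonneg (x - t))]

lemma abs_div_sqrt_sub_one_mul_one_add_sq_le {x : ℝ} (hx : 0 ≤ x) (t : ℝ) :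
    |((x - t) / √(1 + (x - t) ^ 2) - 1) * (1 + x ^ 2)| ≤ 2 * (1 + t ^ 2) := by
  obtain ⟨hlow, hup⟩ := abs_lt.1 (abs_div_sqrt_one_add_sq_lt_one (x - t))
  have hweight : 0 < 1 + x ^ 2 := by positivity
  rw [abs_mul, abs_sub_comm, abs_of_pos (by linarith), abs_of_pos hweight]
  rcases le_or_gt t x with htx | hxt
  · calc (1 - (x - t) / √(1 + (x - t) ^ 2)) * (1 + x ^ 2)
        ≤ (1 + (x - t) ^ 2)⁻¹ * (2 * (1 + t ^ 2) * (1 + (x - t) ^ 2)) :=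
          mul_le_mul (one_sub_div_sqrt_one_add_sq_le_inv (sub_nonneg.2 htx))
            (one_add_sq_le_two_mul_one_add_sq_mul x t) hweight.le (by positivity)
      _ = 2 * (1 + t ^ 2) := by field_simp
  · have : x ^ 2 ≤ t ^ 2 := pow_le_pow_left₀ hx hxt.le 2
    nlinarith

/-- With `f(x) = x/√(1+x²)` and `K ⊆ ℝ` compact, `(f(x−t) − 1)(1+x²)` is uniformly bounded
for `x ∈ [0,∞)`, `t ∈ K`, and `(f(x−t) + 1)(1+x²)` is uniformly bounded for
`x ∈ (−∞,0]`, `t ∈ K`. -/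
theorem stmt6 (K : Set ℝ) (hK : IsCompact K) :
    ∃ M : ℝ,
      (∀ x : ℝ, 0 ≤ x → ∀ t ∈ K,
        |((x - t) / Real.sqrt (1 + (x - t) ^ 2) - 1) * (1 + x ^ 2)| ≤ M) ∧
      (∀ x : ℝ, x ≤ 0 → ∀ t ∈ K,
        |((x - t) / Real.sqrt (1 + (x - t) ^ 2) + 1) * (1 + x ^ 2)| ≤ M) := by
  obtain ⟨M, hM⟩ := hK.bddAbove_image (f := fun t : ℝ ↦ 2 * (1 + t ^ 2)) (by fun_prop)
  refine ⟨M, fun x hx t ht ↦ ?_, fun x hx t ht ↦ ?_⟩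
  · exact (abs_div_sqrt_sub_one_mul_one_add_sq_le hx t).trans (hM ⟨t, ht, rfl⟩)
  · have h := abs_div_sqrt_sub_one_mul_one_add_sq_le (neg_nonneg.2 hx) (-t)
    rw [show -x - -t = -(x - t) by ring, neg_div, ← neg_add', neg_mul, abs_neg] at h
    simp only [neg_sq] at h
    exact h.trans (hM ⟨t, ht, rfl⟩)
end

section
/- Let f(x) = x/√(1+x²) and let h : ℝ → [0, ∞) be an integrable function with ∫_ℝ h = 1 and with compact support. Then the function x ↦ ((f ∗ h)(x)² − 1)(1 + x²) is bounded on ℝ, where (f ∗ h)(x) = ∫_ℝ f(x − t) h(t) dt. -/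
/-!
Write `f u = u / √(1 + u²)` and `g = f ∗ h`. Since `|f| ≤ 1` and `h` is a probability density,
`|g x| ≤ 1`, so `(1 - g(x)²)(1 + x²) ≤ 2 (1 - |g x|)(1 + x²)`, and only large `|x|` matter. There,
`x - t` has the sign of `x` for every `t` in the support `[-R, R]` of `h`, and
`1 - |f u| ≤ 1 / (1 + u²)` with `1 + x² ≤ 4 (1 + (x - t)²)` gives `1 - |g x| ≤ 4 / (1 + x²)`.
-/

open MeasureTheory

lemma abs_div_sqrt_one_add_sq_le_one (u : ℝ) : |u / √(1 + u ^ 2)| ≤ 1 := by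
  have hs : 0 < √(1 + u ^ 2) := Real.sqrt_pos.2 (by positivity)
  rw [abs_div, abs_of_pos hs, div_le_one hs, ← Real.sqrt_sq_eq_abs]
  exact Real.sqrt_le_sqrt (by linarith)

lemma one_sub_abs_div_sqrt_one_add_sq_le (u : ℝ) :
    1 - |u / √(1 + u ^ 2)| ≤ 1 / (1 + u ^ 2) := by
  set s := √(1 + u ^ 2)
  have hs : 0 < s := Real.sqrt_pos.2 (by positivity)
  have hs2 : s ^ 2 = 1 + u ^ 2 := Real.sq_sqrt (by positivity)
  have hus : |u| ≤ s := by nlinarith [sq_abs u, abs_nonneg u]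
  rw [abs_div, abs_of_pos hs, ← hs2, one_sub_div hs.ne', div_le_div_iff₀ hs (by positivity)]
  -- `(s - |u|)(s + |u|) = 1`
  nlinarith [sq_abs u, mul_nonneg (abs_nonneg u) (sub_nonneg.2 hus)]

lemma one_sub_four_div_le_abs_div_sqrt {x u : ℝ} (hxu : |x| ≤ 2 * |u|) :
    1 - 4 / (1 + x ^ 2) ≤ |u / √(1 + u ^ 2)| := by
  have hx : 1 + x ^ 2 ≤ 4 * (1 + u ^ 2) := by
    nlinarith [sq_abs x, sq_abs u, abs_nonneg x]
  have : 1 / (1 + u ^ 2) ≤ 4 / (1 + x ^ 2) := by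
    rw [div_le_div_iff₀ (by positivity) (by positivity)]
    linarith
  linarith [one_sub_abs_div_sqrt_one_add_sq_le u]

section ProbabilityDensity

variable {h : ℝ → ℝ} (hint : Integrable h) (hpos : ∀ t, 0 ≤ h t) (hone : ∫ t, h t = 1)
include hint hpos hone

lemma le_integral_mul_of_le_on_support {φ : ℝ → ℝ} {c : ℝ}
    (hφ : Integrable fun t => φ t * h t) (hc : ∀ t, h t ≠ 0 → c ≤ φ t) :
    c ≤ ∫ t, φ t * h t := by
  calc c = ∫ t, c * h t := by rw [integral_const_mul, hone, mul_one]
    _ ≤ ∫ t, φ t * h t := by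
      refine integral_mono (hint.const_mul c) hφ fun t => ?_
      by_cases ht : h t = 0
      · simp [ht]
      · exact mul_le_mul_of_nonneg_right (hc t ht) (hpos t)

omit hpos hone in
lemma integrable_div_sqrt_one_add_sq_mul (x : ℝ) :
    Integrable fun t => (x - t) / √(1 + (x - t) ^ 2) * h t := by
  have hcont : Continuous fun t => (x - t) / √(1 + (x - t) ^ 2) :=
    .div (by fun_prop) (by fun_prop) fun t => (Real.sqrt_pos.2 (by positivity)).ne'
  refine hint.bdd_mul (c := 1) hcont.aestronglyMeasurable (.of_forall fun t => ?_)
  simpa only [Real.norm_eq_abs] using abs_div_sqrt_one_add_sq_le_one (x - t)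

lemma abs_integral_div_sqrt_one_add_sq_mul_le_one (x : ℝ) :
    |∫ t, (x - t) / √(1 + (x - t) ^ 2) * h t| ≤ 1 := by
  rw [← Real.norm_eq_abs]
  refine (norm_integral_le_of_norm_le hint (.of_forall fun t => ?_)).trans_eq hone
  rw [norm_mul, Real.norm_eq_abs, Real.norm_of_nonneg (hpos t)]
  exact mul_le_of_le_one_left (hpos t) (abs_div_sqrt_one_add_sq_le_one _)

lemma one_sub_abs_integral_div_sqrt_one_add_sq_mul_le {R x : ℝ}
    (hR : ∀ t, h t ≠ 0 → |t| < R) (hx : 2 * R ≤ |x|) :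
    (1 - |∫ t, (x - t) / √(1 + (x - t) ^ 2) * h t|) * (1 + x ^ 2) ≤ 4 := by
  set f : ℝ → ℝ := fun u => u / √(1 + u ^ 2)
  set σ : ℝ := if 0 ≤ x then 1 else -1
  have hσ : |σ| = 1 := by unfold σ; split_ifs <;> simp
  -- on the support of `h`, `x - t` has the sign of `x`
  have hσf : ∀ t, h t ≠ 0 → 1 - 4 / (1 + x ^ 2) ≤ σ * f (x - t) := by
    intro t ht
    have htR := hR t ht
    have hsign : 0 ≤ σ * (x - t) ∧ |x| ≤ 2 * |x - t| := by
      unfold σ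
      split_ifs <;>
        constructor <;> cases abs_cases x <;> cases abs_cases t <;> cases abs_cases (x - t) <;> linarith
    have hσf_nonneg : 0 ≤ σ * f (x - t) := by
      rw [← mul_div_assoc]
      exact div_nonneg hsign.1 (Real.sqrt_nonneg _)
    calc 1 - 4 / (1 + x ^ 2) ≤ |f (x - t)| := one_sub_four_div_le_abs_div_sqrt hsign.2
      _ = σ * f (x - t) := by
        rw [← one_mul |f (x - t)|, ← hσ, ← abs_mul, abs_of_nonneg hσf_nonneg]
  have hle := le_integral_mul_of_le_on_support hint hpos hone
    (by simpa only [mul_assoc] using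
      (integrable_div_sqrt_one_add_sq_mul hint x).const_mul σ) hσf
  simp only [mul_assoc, integral_const_mul] at hle
  have hσg : σ * ∫ t, f (x - t) * h t ≤ |∫ t, f (x - t) * h t| := by
    calc _ ≤ |σ * ∫ t, f (x - t) * h t| := le_abs_self _
      _ = _ := by rw [abs_mul, hσ, one_mul]
  have hx2 : 0 < 1 + x ^ 2 := by positivity
  calc (1 - |∫ t, f (x - t) * h t|) * (1 + x ^ 2) ≤ 4 / (1 + x ^ 2) * (1 + x ^ 2) := by
        gcongr; linarith
    _ = 4 := div_mul_cancel₀ 4 hx2.ne'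

end ProbabilityDensity

/-- With `f(x) = x/√(1+x²)` and `h ≥ 0` integrable of integral one with compact support,
the function `x ↦ ((f ∗ h)(x)² − 1)(1 + x²)` is bounded on `ℝ`. -/
theorem stmt7 (h : ℝ → ℝ) (hint : Integrable h) (hpos : ∀ t, 0 ≤ h t)
    (hone : (∫ t, h t) = 1) (hsupp : HasCompactSupport h) :
    ∃ M : ℝ, ∀ x : ℝ,
      |((∫ t, ((x - t) / Real.sqrt (1 + (x - t) ^ 2)) * h t) ^ 2 - 1) * (1 + x ^ 2)| ≤ M := by
  obtain ⟨R, -, hR⟩ := hsupp.exists_pos_le_norm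
  have hsupp_R : ∀ t, h t ≠ 0 → |t| < R := fun t ht => not_le.1 fun htR => ht (hR t htR)
  refine ⟨max 8 (1 + (2 * R) ^ 2), fun x => ?_⟩
  set g := ∫ t, ((x - t) / Real.sqrt (1 + (x - t) ^ 2)) * h t
  have hg : |g| ≤ 1 := abs_integral_div_sqrt_one_add_sq_mul_le_one hint hpos hone x
  have hx2 : 0 < 1 + x ^ 2 := by positivity
  rw [abs_of_nonpos (mul_nonpos_of_nonpos_of_nonneg (by nlinarith [sq_abs g, abs_nonneg g]) hx2.le)]
  rcases le_or_gt (2 * R) |x| with hx | hx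
  · have := one_sub_abs_integral_div_sqrt_one_add_sq_mul_le hint hpos hone hsupp_R hx
    refine le_max_of_le_left ?_
    nlinarith [sq_abs g, abs_nonneg g]
  · refine le_max_of_le_right ?_
    nlinarith [sq_abs g, sq_abs x, abs_nonneg x, sq_nonneg g]
end

section
/- Let X be a proper metric space, H an ample X-module, A ⊆ X, and R ≥ 0. Let T, S ∈ B(H) with T ≠ 0, supp(T) ⊆ N_R(A) × N_R(A), and suppose for given ε > 0 there is R₀ > 0 such that S has (ε/‖T‖, R₀)-propagation. Then ‖TS − χ_{N_R(A)} T S χ_{N_{R+R₀}(A)}‖ ≤ ε. -/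
open Metric

/-- A projection-valued assignment of Borel sets to commuting multiplication projections,
abstracting the `X`-module structure `f ↦ χ_A` on a Hilbert space `H`. -/
structure BorelModule (X : Type*) [MetricSpace X] [MeasurableSpace X]
    (H : Type*) [NormedAddCommGroup H] [InnerProductSpace ℂ H] [CompleteSpace H] where
  χ : Set X → H →L[ℂ] H
  selfadj : ∀ A, IsSelfAdjoint (χ A)
  mul : ∀ A B, χ A ∘L χ B = χ (A ∩ B)
  add : ∀ A B : Set X, Disjoint A B → χ (A ∪ B) = χ A + χ B
  univ : χ Set.univ = 1

variable {X : Type*} [MetricSpace X] [MeasurableSpace X] [BorelSpace X]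
  {H : Type*} [NormedAddCommGroup H] [InnerProductSpace ℂ H] [CompleteSpace H]

/-- `T` has `(ε, R)`-propagation. -/
def HasPropW (M : BorelModule X H) (T : H →L[ℂ] H) (ε R : ℝ) : Prop :=
  ∀ A B : Set X, MeasurableSet A → MeasurableSet B →
    (∀ a ∈ A, ∀ b ∈ B, R ≤ dist a b) → ‖M.χ A ∘L T ∘L M.χ B‖ < ε

/-- If `supp(T) ⊆ N_R(A) × N_R(A)` and `S` has `(ε/‖T‖, R₀)`-propagation, then
`‖TS − χ_{N_R(A)} T S χ_{N_{R+R₀}(A)}‖ ≤ ε`. -/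
theorem stmt17 [ProperSpace X] (M : BorelModule X H) (A : Set X)
    (R R₀ ε : ℝ) (hR : 0 ≤ R) (hR₀ : 0 < R₀) (hε : 0 < ε)
    (T S : H →L[ℂ] H) (hT0 : T ≠ 0)
    (hsupp : T = M.χ {x : X | infDist x A ≤ R} ∘L T ∘L M.χ {x : X | infDist x A ≤ R})
    (hS : HasPropW M S (ε / ‖T‖) R₀) :
    ‖T ∘L S - M.χ {x : X | infDist x A ≤ R} ∘L (T ∘L S) ∘L
        M.χ {x : X | infDist x A ≤ R + R₀}‖ ≤ ε := by
  set N := {x : X | infDist x A ≤ R} with hN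
  set N' := {x : X | infDist x A ≤ R + R₀} with hN'
  have hTnorm : 0 < ‖T‖ := norm_pos_iff.mpr hT0
  simp only [← ContinuousLinearMap.mul_def] at hsupp ⊢
  have hmulN : M.χ N * M.χ N = M.χ N := by
    rw [ContinuousLinearMap.mul_def, M.mul]; simp
  have hl : M.χ N * T = T := by
    conv_lhs => rw [hsupp]
    rw [← mul_assoc, hmulN, ← hsupp]
  have hr : T * M.χ N = T := by
    conv_lhs => rw [hsupp]
    rw [mul_assoc, mul_assoc, hmulN, ← hsupp]
  have hone : M.χ N' + M.χ N'ᶜ = 1 := by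
    rw [← M.add _ _ disjoint_compl_right, Set.union_compl_self, M.univ]
  have key : T * S - M.χ N * (T * S * M.χ N') = T * (M.χ N * S * M.χ N'ᶜ) := by
    have h1 : M.χ N * (T * S * M.χ N') = T * S * M.χ N' := by
      rw [← mul_assoc, ← mul_assoc, hl]
    have h2 : T * (M.χ N * S * M.χ N'ᶜ) = T * S * M.χ N'ᶜ := by
      rw [← mul_assoc, ← mul_assoc, hr, mul_assoc]
    have h3 : T * S * M.χ N' + T * S * M.χ N'ᶜ = T * S := by
      rw [← mul_add, hone, mul_one]
    rw [h1, h2]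
    exact sub_eq_iff_eq_add.mpr (by rw [add_comm, h3])
  rw [key]
  have hmeasN : MeasurableSet N :=
    (isClosed_le (continuous_infDist_pt A) continuous_const).measurableSet
  have hmeasN' : MeasurableSet N'ᶜ :=
    (isClosed_le (continuous_infDist_pt A) continuous_const).measurableSet.compl
  have hdist : ∀ a ∈ N, ∀ b ∈ N'ᶜ, R₀ ≤ dist a b := by
    intro a ha b hb
    have ha' : infDist a A ≤ R := ha
    have hb' : ¬ infDist b A ≤ R + R₀ := hb
    push_neg at hb'
    have h2 : infDist b A ≤ infDist a A + dist b a := infDist_le_infDist_add_dist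
    rw [dist_comm b a] at h2
    linarith
  have hprop := hS N N'ᶜ hmeasN hmeasN' hdist
  simp only [← ContinuousLinearMap.mul_def] at hprop
  calc ‖T * (M.χ N * S * M.χ N'ᶜ)‖ ≤ ‖T‖ * ‖M.χ N * S * M.χ N'ᶜ‖ := norm_mul_le _ _
    _ ≤ ‖T‖ * (ε / ‖T‖) := mul_le_mul_of_nonneg_left hprop.le (norm_nonneg T)
    _ = ε := by field_simp
end

section
/- Let X be a proper discrete metric space with bounded geometry and H an ample X-module. Every locally compact operator T on H with finite propagation is strongly quasi-local: for every ε > 0 there exist δ, R > 0 such that for every map g : X → K(𝓗)₁ with (δ, R)-variation, ‖[T ⊗ Id_𝓗, Λ(g)]‖ < ε. Consequently the Roe algebra C*(H) is contained in the strongly quasi-local algebra C*_{sq}(H). -/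
/-!
The `(x, y)` block of `[T ⊗ 1, Λ(g)]` with respect to the projections `χ x ⊗ 1` is
`χ x T χ y ⊗ (g y - g x)`. It vanishes when `dist x y > R₀` and has norm at most `‖T‖ δ`
otherwise, provided `g` has `(δ, R₀ + 1)`-variation. By a Schur test (Cauchy–Schwarz on each row,
Parseval for the projections `χ x ⊗ 1`), an operator whose blocks vanish beyond distance `r` and
are bounded by `M` has norm at most `N M`, where `N` bounds the cardinality of `r`-balls; so
`δ = ε / ((N + 1) (‖T‖ + 1))` works.
-/

open Metric

section StarProjection

variable {𝕜 ι E : Type*} [RCLike 𝕜] [NormedAddCommGroup E] [InnerProductSpace 𝕜 E]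
  [CompleteSpace E]

lemma IsStarProjection.inner_apply_right_eq_norm_sq {p : E →L[𝕜] E} (hp : IsStarProjection p)
    (u : E) : inner 𝕜 u (p u) = (‖p u‖ : 𝕜) ^ 2 := by
  calc inner 𝕜 u (p u) = inner 𝕜 u (p (p u)) := by
        rw [show p (p u) = p u from DFunLike.congr_fun hp.isIdempotentElem.eq u]
    _ = inner 𝕜 (p u) (p u) := by
        rw [← ContinuousLinearMap.adjoint_inner_left, ← ContinuousLinearMap.star_eq_adjoint,
          hp.isSelfAdjoint.star_eq]
    _ = (‖p u‖ : 𝕜) ^ 2 := inner_self_eq_norm_sq_to_K _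

lemma hasSum_norm_sq_of_hasSum_isStarProjection {P : ι → E →L[𝕜] E}
    (hP : ∀ i, IsStarProjection (P i)) {u : E} (hu : HasSum (fun i => P i u) u) :
    HasSum (fun i => ‖P i u‖ ^ 2) (‖u‖ ^ 2) := by
  have h := RCLike.reCLM.hasSum ((innerSL 𝕜 u).hasSum hu)
  simpa only [ContinuousLinearMap.coe_coe, innerSL_apply_apply, RCLike.reCLM_apply,
    (hP _).inner_apply_right_eq_norm_sq, inner_self_eq_norm_sq_to_K, ← RCLike.ofReal_pow,
    RCLike.ofReal_re] using h

end StarProjection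

section BoundedGeometry

variable {X : Type*} [PseudoMetricSpace X] {r : ℝ} {N : ℕ}
  (hfin : ∀ x : X, (ball x r).Finite) (hcard : ∀ x : X, (ball x r).ncard ≤ N)
include hfin hcard

lemma card_toFinset_ball_le (x : X) : (hfin x).toFinset.card ≤ N :=
  Set.ncard_eq_toFinset_card _ (hfin x) ▸ hcard x

lemma sum_sum_ball_le {a : X → ℝ} (ha : ∀ x, 0 ≤ a x) {s : ℝ} (hs : HasSum a s)
    (A : Finset X) : ∑ x ∈ A, ∑ y ∈ (hfin x).toFinset, a y ≤ N * s := by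
  classical
  have hswap : ∑ x ∈ A, ∑ y ∈ (hfin x).toFinset, a y
      = ∑ y ∈ A.biUnion (fun x => (hfin x).toFinset),
          ∑ x ∈ A.filter (fun x => y ∈ ball x r), a y :=
    Finset.sum_comm' fun x y => by
      simp only [Set.Finite.mem_toFinset, Finset.mem_filter, Finset.mem_biUnion]
      exact ⟨fun h => ⟨⟨h.1, h.2⟩, x, h⟩, fun h => ⟨h.1.1, h.1.2⟩⟩
  have hmult : ∀ y, ((A.filter (fun x => y ∈ ball x r)).card : ℝ) ≤ N := by
    intro y
    have hsub : A.filter (fun x => y ∈ ball x r) ⊆ (hfin y).toFinset := by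
      intro x hx
      simpa [dist_comm] using (Finset.mem_filter.mp hx).2
    exact_mod_cast (Finset.card_le_card hsub).trans (card_toFinset_ball_le hfin hcard y)
  calc ∑ x ∈ A, ∑ y ∈ (hfin x).toFinset, a y
      = ∑ y ∈ A.biUnion (fun x => (hfin x).toFinset),
          ((A.filter (fun x => y ∈ ball x r)).card : ℝ) * a y := by
        rw [hswap]; simp only [Finset.sum_const, nsmul_eq_mul]
    _ ≤ ∑ y ∈ A.biUnion (fun x => (hfin x).toFinset), N * a y :=
        Finset.sum_le_sum fun y _ => mul_le_mul_of_nonneg_right (hmult y) (ha y)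
    _ ≤ N * s := by
        rw [← Finset.mul_sum]
        exact mul_le_mul_of_nonneg_left (sum_le_hasSum _ (fun y _ => ha y) hs) N.cast_nonneg

end BoundedGeometry

section Propagation

variable {𝕜 X E : Type*} [PseudoMetricSpace X] {r : ℝ}
  (hfin : ∀ x : X, (ball x r).Finite)
include hfin

lemma apply_eq_sum_ball [NontriviallyNormedField 𝕜] [NormedAddCommGroup E] [NormedSpace 𝕜 E]
    {P : X → E →L[𝕜] E} (S : E →L[𝕜] E) (hprop : ∀ x y, r ≤ dist x y → P x * S * P y = 0)
    {v : E} (hv : HasSum (fun x => P x v) v) (x : X) :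
    P x (S v) = ∑ y ∈ (hfin x).toFinset, (P x * S * P y) v := by
  refine ((P x * S).hasSum hv).unique (hasSum_sum_of_ne_finset_zero fun y hy => ?_)
  rw [Set.Finite.mem_toFinset, mem_ball, not_lt, dist_comm] at hy
  exact DFunLike.congr_fun (hprop x y hy) v

lemma norm_apply_le_mul_sum_ball [NontriviallyNormedField 𝕜] [NormedAddCommGroup E]
    [NormedSpace 𝕜 E] {P : X → E →L[𝕜] E} (S : E →L[𝕜] E) (hP : ∀ x, IsIdempotentElem (P x))
    (hprop : ∀ x y, r ≤ dist x y → P x * S * P y = 0) {M : ℝ}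
    (hM : ∀ x y, dist x y < r → ‖P x * S * P y‖ ≤ M) {v : E} (hv : HasSum (fun x => P x v) v)
    (x : X) :
    ‖P x (S v)‖ ≤ M * ∑ y ∈ (hfin x).toFinset, ‖P y v‖ := by
  rw [apply_eq_sum_ball hfin S hprop hv, Finset.mul_sum]
  refine (norm_sum_le _ _).trans (Finset.sum_le_sum fun y hy => ?_)
  rw [Set.Finite.mem_toFinset, mem_ball, dist_comm] at hy
  calc ‖(P x * S * P y) v‖ = ‖(P x * S * P y) (P y v)‖ := by
        have hPy : P y (P y v) = P y v := DFunLike.congr_fun (hP y).eq v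
        exact congrArg (fun w => ‖(P x * S) w‖) hPy.symm
    _ ≤ M * ‖P y v‖ := (ContinuousLinearMap.le_opNorm _ _).trans (by gcongr; exact hM x y hy)

theorem opNorm_le_of_propagation [RCLike 𝕜] [NormedAddCommGroup E] [InnerProductSpace 𝕜 E]
    [CompleteSpace E] {P : X → E →L[𝕜] E} (S : E →L[𝕜] E) (hP : ∀ x, IsStarProjection (P x))
    (hsum : ∀ u, HasSum (fun x => P x u) u) {N : ℕ} (hcard : ∀ x : X, (ball x r).ncard ≤ N)
    (hprop : ∀ x y, r ≤ dist x y → P x * S * P y = 0) {M : ℝ} (hM0 : 0 ≤ M)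
    (hM : ∀ x y, dist x y < r → ‖P x * S * P y‖ ≤ M) : ‖S‖ ≤ N * M := by
  refine S.opNorm_le_bound (by positivity) fun v => ?_
  have hrow : ∀ x, ‖P x (S v)‖ ^ 2 ≤ M ^ 2 * N * ∑ y ∈ (hfin x).toFinset, ‖P y v‖ ^ 2 := by
    intro x
    calc ‖P x (S v)‖ ^ 2 ≤ (M * ∑ y ∈ (hfin x).toFinset, ‖P y v‖) ^ 2 := by
          gcongr
          exact norm_apply_le_mul_sum_ball hfin S (fun x => (hP x).isIdempotentElem) hprop hM
            (hsum v) x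
      _ ≤ M ^ 2 * ((hfin x).toFinset.card * ∑ y ∈ (hfin x).toFinset, ‖P y v‖ ^ 2) := by
          rw [mul_pow]
          gcongr
          exact sq_sum_le_card_mul_sum_sq
      _ ≤ M ^ 2 * N * ∑ y ∈ (hfin x).toFinset, ‖P y v‖ ^ 2 := by
          rw [mul_assoc]
          gcongr
          exact_mod_cast card_toFinset_ball_le hfin hcard x
  have hsq : ‖S v‖ ^ 2 ≤ (N * M) ^ 2 * ‖v‖ ^ 2 := by
    refine hasSum_le_of_sum_le (hasSum_norm_sq_of_hasSum_isStarProjection hP (hsum (S v)))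
      fun A => ?_
    calc ∑ x ∈ A, ‖P x (S v)‖ ^ 2
        ≤ M ^ 2 * N * ∑ x ∈ A, ∑ y ∈ (hfin x).toFinset, ‖P y v‖ ^ 2 := by
          rw [Finset.mul_sum]
          exact Finset.sum_le_sum fun x _ => hrow x
      _ ≤ M ^ 2 * N * (N * ‖v‖ ^ 2) := by
          gcongr
          exact sum_sum_ball_le hfin hcard (fun y => sq_nonneg _)
            (hasSum_norm_sq_of_hasSum_isStarProjection hP (hsum v)) A
      _ = (N * M) ^ 2 * ‖v‖ ^ 2 := by ring
  exact le_of_pow_le_pow_left₀ two_ne_zero (by positivity) (by rwa [mul_pow])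

end Propagation

lemma IsStarProjection.norm_mul_mul_le {A : Type*} [NonUnitalNormedRing A] [StarRing A]
    [CStarRing A] {p q : A} (hp : IsStarProjection p) (hq : IsStarProjection q) (a : A) :
    ‖p * a * q‖ ≤ ‖a‖ := calc
  ‖p * a * q‖ ≤ ‖p‖ * ‖a‖ * ‖q‖ := norm_mul₃_le
  _ ≤ 1 * ‖a‖ * 1 := by gcongr; exacts [hp.norm_le, hq.norm_le]
  _ = ‖a‖ := by ring

section ElementaryTensor

variable {A B C : Type*} (ot : A → B → C)

lemma isStarProjection_elementaryTensor_one [Monoid A] [StarMul A] [Monoid B] [StarMul B]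
    [Mul C] [Star C] (hmul : ∀ a a' b b', ot a b * ot a' b' = ot (a * a') (b * b'))
    (hstar : ∀ a b, ot (star a) (star b) = star (ot a b)) {p : A} (hp : IsStarProjection p) :
    IsStarProjection (ot p 1) :=
  ⟨by rw [IsIdempotentElem, hmul, hp.isIdempotentElem.eq, mul_one],
    by rw [IsSelfAdjoint, ← hstar, hp.isSelfAdjoint.star_eq, star_one]⟩

lemma elementaryTensor_one_mul_commutator_mul [Monoid A] [Ring B] [Ring C] {ι : Type*}
    (hmul : ∀ a a' b b', ot a b * ot a' b' = ot (a * a') (b * b'))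
    (hsub : ∀ a b b', ot a (b - b') = ot a b - ot a b') (χ : ι → A) (g : ι → B) {L : C}
    (hL₁ : ∀ x, L * ot (χ x) 1 = ot (χ x) (g x)) (hL₂ : ∀ x, ot (χ x) 1 * L = ot (χ x) (g x))
    (T : A) (x y : ι) :
    ot (χ x) 1 * (ot T 1 * L - L * ot T 1) * ot (χ y) 1 = ot (χ x * T * χ y) (g y - g x) := calc
  ot (χ x) 1 * (ot T 1 * L - L * ot T 1) * ot (χ y) 1
      = ot (χ x) 1 * ot T 1 * (L * ot (χ y) 1) - ot (χ x) 1 * L * ot T 1 * ot (χ y) 1 := by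
    noncomm_ring
  _ = ot (χ x * T * χ y) (g y - g x) := by
    rw [hL₁, hL₂, hmul, hmul, hmul, hmul, hsub]
    simp only [one_mul, mul_one]

end ElementaryTensor

lemma mul_mul_div_lt {a b ε : ℝ} (ha : 0 ≤ a) (hb : 0 ≤ b) (hε : 0 < ε) :
    a * (b * (ε / ((a + 1) * (b + 1)))) < ε := by
  rw [← mul_assoc, mul_div_assoc', div_lt_iff₀ (by positivity)]
  nlinarith

theorem stmt19_general {X : Type*} [MetricSpace X]
    (hbg : ∀ r > (0 : ℝ), ∃ N : ℕ, ∀ x : X,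
      (Metric.ball x r).Finite ∧ (Metric.ball x r).ncard ≤ N)
    {H E HH : Type*}
    [NormedAddCommGroup H] [InnerProductSpace ℂ H] [CompleteSpace H]
    [NormedAddCommGroup E] [InnerProductSpace ℂ E] [CompleteSpace E]
    [NormedAddCommGroup HH] [InnerProductSpace ℂ HH] [CompleteSpace HH]
    (χ : X → H →L[ℂ] H)
    (hidem : ∀ x, χ x ∘L χ x = χ x)
    (hsa : ∀ x, IsSelfAdjoint (χ x))
    (ot : (H →L[ℂ] H) → (E →L[ℂ] E) → (HH →L[ℂ] HH))
    (hmul : ∀ a a' b b', ot a b ∘L ot a' b' = ot (a ∘L a') (b ∘L b'))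
    (hadd₂ : ∀ a b b', ot a (b + b') = ot a b + ot a b')
    (hneg₂ : ∀ a b, ot a (-b) = -ot a b)
    (hstar : ∀ a b, ot (star a) (star b) = star (ot a b))
    (hnorm : ∀ a b, ‖ot a b‖ = ‖a‖ * ‖b‖)
    (hcomplete' : ∀ w : HH, HasSum (fun x => ot (χ x) 1 w) w)
    (T : H →L[ℂ] H) (R₀ : ℝ) (hR₀ : 0 ≤ R₀)
    (hTprop : ∀ x y : X, R₀ < dist x y → χ x ∘L T ∘L χ y = 0) :
    ∀ ε > (0 : ℝ), ∃ δ > (0 : ℝ), ∃ R > (0 : ℝ),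
      ∀ g : X → E →L[ℂ] E,
        (∀ x, IsCompactOperator (g x)) → (∀ x, ‖g x‖ ≤ 1) →
        (∀ x y : X, dist x y < R → ‖g x - g y‖ < δ) →
        ∀ L : HH →L[ℂ] HH,
          (∀ x, L ∘L ot (χ x) 1 = ot (χ x) (g x)) →
          (∀ x, ot (χ x) 1 ∘L L = ot (χ x) (g x)) →
          ‖ot T 1 ∘L L - L ∘L ot T 1‖ < ε := by
  intro ε hε
  obtain ⟨N, hN⟩ := hbg (R₀ + 1) (by linarith)
  set δ := ε / ((N + 1) * (‖T‖ + 1))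
  refine ⟨δ, by positivity, R₀ + 1, by linarith, fun g _ _ hg L hL₁ hL₂ => ?_⟩
  have hχ : ∀ x, IsStarProjection (χ x) := fun x => ⟨hidem x, hsa x⟩
  have hχTχ : ∀ x y, R₀ < dist x y → χ x * T * χ y = 0 := fun x y hxy =>
    (mul_assoc _ _ _).trans (hTprop x y hxy)
  have hentry := elementaryTensor_one_mul_commutator_mul ot hmul
    (fun a b b' => by rw [sub_eq_add_neg, hadd₂, hneg₂, sub_eq_add_neg]) χ g hL₁ hL₂ T
  refine (opNorm_le_of_propagation (fun x => (hN x).1) (ot T 1 * L - L * ot T 1)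
    (fun x => isStarProjection_elementaryTensor_one ot hmul hstar (hχ x)) hcomplete'
    (fun x => (hN x).2) (fun x y hxy => ?_) (by positivity) (fun x y hxy => ?_)).trans_lt
    (mul_mul_div_lt N.cast_nonneg (norm_nonneg T) hε)
  · rw [hentry, hχTχ x y (by linarith), ← norm_eq_zero, hnorm, norm_zero, zero_mul]
  · rw [hentry, hnorm]
    exact mul_le_mul ((hχ x).norm_mul_mul_le (hχ y) T)
      (hg y x (by rwa [dist_comm])).le (norm_nonneg _) (norm_nonneg _)

/-- Every locally compact operator of finite propagation on an ample module over a proper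
discrete bounded-geometry metric space is strongly quasi-local; consequently the Roe
algebra is contained in the strongly quasi-local algebra.

Setup: `χ x` are the orthogonal point projections of the module `H`; `HH` plays the role of
`H ⊗ 𝓗` (with `𝓗 = E` the fixed separable Hilbert space) via an abstract elementary-tensor
map `ot` (`ot a b` represents `a ⊗ b`), additive in each variable, multiplicative,
star-preserving, unital and with the cross-norm `‖a ⊗ b‖ = ‖a‖‖b‖`; the amplified point
projections `χ_x ⊗ 1` again sum strongly to the identity.  `T` is locally compact with
propagation at most `R₀`.  Conclusion: for every `ε > 0` there are `δ, R > 0` such that for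
every map `g : X → K(𝓗)₁` with `(δ, R)`-variation, the operator `Λ(g)` (characterised by
`Λ(g)(χ_x ⊗ 1) = (χ_x ⊗ 1)Λ(g) = χ_x ⊗ g(x)`) satisfies `‖[T ⊗ Id, Λ(g)]‖ < ε`. -/
theorem stmt19 {X : Type*} [MetricSpace X] [ProperSpace X] [DiscreteTopology X]
    (hbg : ∀ r > (0 : ℝ), ∃ N : ℕ, ∀ x : X,
      (Metric.ball x r).Finite ∧ (Metric.ball x r).ncard ≤ N)
    {H E HH : Type*}
    [NormedAddCommGroup H] [InnerProductSpace ℂ H] [CompleteSpace H]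
    [NormedAddCommGroup E] [InnerProductSpace ℂ E] [CompleteSpace E]
    [NormedAddCommGroup HH] [InnerProductSpace ℂ HH] [CompleteSpace HH]
    (χ : X → H →L[ℂ] H)
    (hidem : ∀ x, χ x ∘L χ x = χ x)
    (hsa : ∀ x, IsSelfAdjoint (χ x))
    (horth : ∀ x y, x ≠ y → χ x ∘L χ y = 0)
    (hcomplete : ∀ v : H, HasSum (fun x => χ x v) v)
    (ot : (H →L[ℂ] H) → (E →L[ℂ] E) → (HH →L[ℂ] HH))
    (hmul : ∀ a a' b b', ot a b ∘L ot a' b' = ot (a ∘L a') (b ∘L b'))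
    (hadd₁ : ∀ a a' b, ot (a + a') b = ot a b + ot a' b)
    (hadd₂ : ∀ a b b', ot a (b + b') = ot a b + ot a b')
    (hneg₂ : ∀ a b, ot a (-b) = -ot a b)
    (hstar : ∀ a b, ot (star a) (star b) = star (ot a b))
    (hone : ot 1 1 = 1)
    (hnorm : ∀ a b, ‖ot a b‖ = ‖a‖ * ‖b‖)
    (hcomplete' : ∀ w : HH, HasSum (fun x => ot (χ x) 1 w) w)
    (T : H →L[ℂ] H) (R₀ : ℝ) (hR₀ : 0 ≤ R₀)
    (hTprop : ∀ x y : X, R₀ < dist x y → χ x ∘L T ∘L χ y = 0)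
    (hTlc : ∀ x : X, IsCompactOperator (χ x ∘L T) ∧ IsCompactOperator (T ∘L χ x)) :
    ∀ ε > (0 : ℝ), ∃ δ > (0 : ℝ), ∃ R > (0 : ℝ),
      ∀ g : X → E →L[ℂ] E,
        (∀ x, IsCompactOperator (g x)) → (∀ x, ‖g x‖ ≤ 1) →
        (∀ x y : X, dist x y < R → ‖g x - g y‖ < δ) →
        ∀ L : HH →L[ℂ] HH,
          (∀ x, L ∘L ot (χ x) 1 = ot (χ x) (g x)) →
          (∀ x, ot (χ x) 1 ∘L L = ot (χ x) (g x)) →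
          ‖ot T 1 ∘L L - L ∘L ot T 1‖ < ε :=
  stmt19_general hbg χ hidem hsa ot hmul hadd₂ hneg₂ hstar hnorm hcomplete' T R₀ hR₀ hTprop
end
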